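/- For every angle φ ∈ (0, π/2) there exists a constant c > 0 such that for all complex z with Re z ≥ 1/2 and |arg z| ≤ φ one has Γ(Re z)/|Γ(z)| ≤ c·exp((Re z)·φ·tan φ), where Γ(Re z) is the real Gamma function evaluated at Re z and |Γ(z)| is the modulus of the complex Gamma function at z. -/

import Mathlib

/-!
For `z = x + iy` with `x > 0`, Euler's limit formula gives
`Γ(x) / |Γ(z)| = ∏_{j ≥ 0} |z + j| / (x + j) = ∏_{j ≥ 0} (1 + (y / (x + j))²)^{1/2}`.
Since `s ↦ log (1 + (y / s)²)` decreases, the sum of the logarithms of the factors with `j ≥ 1` is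
at most `∫_x^∞ log (1 + (y / s)²) ds ≤ 2 y arctan (y / x)`, so the product is at most
`(1 + (y / x)²)^{1/2} exp (y arctan (y / x))`. In the sector `|arg z| ≤ φ` we have
`|y / x| ≤ tan φ`, which bounds the two factors by `1 / cos φ` and `exp (x φ tan φ)`.
-/

open Real Filter Finset Set

theorem log_one_add_sq_le_two_mul_mul_arctan (v : ℝ) : log (1 + v ^ 2) ≤ 2 * v * arctan v := by
  set f : ℝ → ℝ := fun v => 2 * v * arctan v - log (1 + v ^ 2)
  have hf : ∀ w, HasDerivAt f (2 * arctan w) w := fun w => by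
    have hsq : HasDerivAt (fun y : ℝ => 1 + y ^ 2) (2 * w) w := by
      simpa using (hasDerivAt_pow 2 w).const_add 1
    have := (((hasDerivAt_id' w).const_mul 2).mul (hasDerivAt_arctan w)).sub
      (hsq.log (by positivity))
    refine this.congr_deriv ?_
    field_simp
    ring
  have hmono : MonotoneOn f (Ici 0) :=
    monotoneOn_of_hasDerivWithinAt_nonneg (convex_Ici 0)
      (fun w _ => (hf w).continuousAt.continuousWithinAt)
      (fun w _ => (hf w).hasDerivWithinAt) fun w hw => by
        rw [interior_Ici] at hw
        exact mul_nonneg zero_le_two (arctan_nonneg.mpr hw.le)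
  have hf_abs : f |v| = f v := by
    rcases abs_choice v with h | h <;> simp only [f, h, arctan_neg, neg_sq]; ring
  have := hmono self_mem_Ici (abs_nonneg v) (abs_nonneg v)
  rw [hf_abs] at this
  simpa [f] using this

theorem mul_arctan_le_of_abs_le {v w : ℝ} (h : |v| ≤ w) : v * arctan v ≤ w * arctan w := by
  have : v * arctan v = |v| * arctan |v| := by
    rcases abs_choice v with hv | hv <;> rw [hv]
    rw [arctan_neg, neg_mul_neg]
  rw [this]
  exact mul_le_mul h (arctan_strictMono.monotone h) (arctan_nonneg.mpr (abs_nonneg v))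
    ((abs_nonneg v).trans h)

/-- The closed form of `∫ s in Ioi t, log (1 + (y / s) ^ 2)` for `0 < t`. -/
noncomputable def logOneAddSqTail (y t : ℝ) : ℝ :=
  2 * y * arctan (y / t) - t * log (1 + (y / t) ^ 2)

theorem hasDerivAt_logOneAddSqTail (y : ℝ) {t : ℝ} (ht : 0 < t) :
    HasDerivAt (logOneAddSqTail y) (-log (1 + (y / t) ^ 2)) t := by
  have hq : HasDerivAt (fun s => y / s) (-(y / t ^ 2)) t := by
    simpa [div_eq_mul_inv] using (hasDerivAt_inv ht.ne').const_mul y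
  have hu : HasDerivAt (fun s => 1 + (y / s) ^ 2) (2 * (y / t) * -(y / t ^ 2)) t := by
    simpa using (hq.pow 2).const_add 1
  have := (hq.arctan.const_mul (2 * y)).sub ((hasDerivAt_id' t).mul (hu.log (by positivity)))
  refine this.congr_deriv ?_
  field_simp
  ring

theorem logOneAddSqTail_nonneg (y : ℝ) {t : ℝ} (ht : 0 < t) : 0 ≤ logOneAddSqTail y t := by
  have := mul_le_mul_of_nonneg_left (log_one_add_sq_le_two_mul_mul_arctan (y / t)) ht.le
  rw [logOneAddSqTail, sub_nonneg]
  calc t * log (1 + (y / t) ^ 2) ≤ t * (2 * (y / t) * arctan (y / t)) := this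
    _ = 2 * y * arctan (y / t) := by field_simp

theorem logOneAddSqTail_le (y : ℝ) {t : ℝ} (ht : 0 < t) :
    logOneAddSqTail y t ≤ 2 * y * arctan (y / t) :=
  sub_le_self _ (mul_nonneg ht.le (log_nonneg (le_add_of_nonneg_right (sq_nonneg _))))

theorem log_one_add_sq_le_logOneAddSqTail_sub (y : ℝ) {s : ℝ} (hs : 0 < s) :
    log (1 + (y / (s + 1)) ^ 2) ≤ logOneAddSqTail y s - logOneAddSqTail y (s + 1) := by
  obtain ⟨ξ, ⟨hsξ, hξs⟩, hξ⟩ := exists_hasDerivAt_eq_slope (logOneAddSqTail y)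
    (fun t => -log (1 + (y / t) ^ 2)) (lt_add_one s)
    (fun t ht => (hasDerivAt_logOneAddSqTail y (hs.trans_le ht.1)).continuousAt.continuousWithinAt)
    (fun t ht => hasDerivAt_logOneAddSqTail y (hs.trans ht.1))
  rw [add_sub_cancel_left, div_one] at hξ
  have hξ0 : 0 < ξ := hs.trans hsξ
  have : (y / (s + 1)) ^ 2 ≤ (y / ξ) ^ 2 := by
    rw [div_pow, div_pow]; gcongr
  have : log (1 + (y / (s + 1)) ^ 2) ≤ log (1 + (y / ξ) ^ 2) :=
    log_le_log (by positivity) (by linarith)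
  linarith

theorem sum_log_one_add_sq_le (y : ℝ) {x : ℝ} (hx : 0 < x) (n : ℕ) :
    ∑ j ∈ range n, log (1 + (y / (x + (j + 1))) ^ 2) ≤
      logOneAddSqTail y x - logOneAddSqTail y (x + n) := by
  induction n with
  | zero => simp
  | succ n ih =>
    have := log_one_add_sq_le_logOneAddSqTail_sub y (s := x + n) (by positivity)
    rw [sum_range_succ, Nat.cast_succ, ← add_assoc]
    linarith

theorem prod_one_add_sq_div_le (y : ℝ) {x : ℝ} (hx : 0 < x) (n : ℕ) :
    ∏ j ∈ range (n + 1), (1 + (y / (x + j)) ^ 2) ≤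
      (1 + (y / x) ^ 2) * exp (2 * y * arctan (y / x)) := by
  have hsum : ∑ j ∈ range (n + 1), log (1 + (y / (x + j)) ^ 2) ≤
      log (1 + (y / x) ^ 2) + 2 * y * arctan (y / x) := by
    rw [sum_range_succ']
    push_cast
    rw [add_zero]
    linarith [sum_log_one_add_sq_le y hx n, logOneAddSqTail_nonneg y (t := x + n) (by positivity),
      logOneAddSqTail_le y hx]
  calc ∏ j ∈ range (n + 1), (1 + (y / (x + j)) ^ 2)
      = exp (∑ j ∈ range (n + 1), log (1 + (y / (x + j)) ^ 2)) := by
        rw [exp_sum]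
        exact prod_congr rfl fun j _ => (exp_log (by positivity)).symm
    _ ≤ exp (log (1 + (y / x) ^ 2) + 2 * y * arctan (y / x)) := exp_le_exp.mpr hsum
    _ = _ := by rw [exp_add, exp_log (by positivity)]

namespace Complex

theorem norm_div_re_eq_sqrt {w : ℂ} (hw : 0 < w.re) : ‖w‖ / w.re = √(1 + (w.im / w.re) ^ 2) := by
  have : w.re ^ 2 + w.im ^ 2 = (1 + (w.im / w.re) ^ 2) * w.re ^ 2 := by
    field_simp
  rw [norm_eq_sqrt_sq_add_sq, this, sqrt_mul (by positivity), sqrt_sq hw.le,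
    mul_div_cancel_right₀ _ hw.ne']

theorem prod_norm_add_natCast_div_re_le {z : ℂ} (hz : 0 < z.re) (n : ℕ) :
    ∏ j ∈ range (n + 1), ‖z + j‖ / (z.re + j) ≤
      √(1 + (z.im / z.re) ^ 2) * Real.exp (z.im * Real.arctan (z.im / z.re)) := by
  calc ∏ j ∈ range (n + 1), ‖z + j‖ / (z.re + j)
      = √(∏ j ∈ range (n + 1), (1 + (z.im / (z.re + j)) ^ 2)) := by
        rw [sqrt_prod _ fun _ _ => by positivity]
        refine prod_congr rfl fun j _ => ?_
        simpa using norm_div_re_eq_sqrt (w := z + j) (by simp; positivity)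
    _ ≤ √((1 + (z.im / z.re) ^ 2) * Real.exp (2 * z.im * Real.arctan (z.im / z.re))) :=
        sqrt_le_sqrt (prod_one_add_sq_div_le z.im hz n)
    _ = _ := by
        rw [sqrt_mul (by positivity), mul_assoc, two_mul, Real.exp_add,
          sqrt_mul_self (Real.exp_pos _).le]

end Complex

theorem Real.GammaSeq_re_eq_norm_mul_prod {z : ℂ} (hz : 0 < z.re) {n : ℕ} (hn : n ≠ 0) :
    Real.GammaSeq z.re n = ‖Complex.GammaSeq z n‖ * ∏ j ∈ range (n + 1), ‖z + j‖ / (z.re + j) := by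
  have hre : ∏ j ∈ range (n + 1), (z.re + j) ≠ 0 := prod_ne_zero_iff.mpr fun j _ => by positivity
  have hnorm : ∏ j ∈ range (n + 1), ‖z + j‖ ≠ 0 := prod_ne_zero_iff.mpr fun j _ =>
    norm_ne_zero_iff.mpr fun h => by
      have : 0 < (z + j).re := by simp; positivity
      simp [h] at this
  rw [Complex.GammaSeq, Real.GammaSeq, norm_div, norm_mul, norm_prod,
    Complex.norm_natCast_cpow_of_pos (Nat.pos_of_ne_zero hn), Complex.norm_natCast,
    prod_div_distrib]
  field_simp

theorem Real.Gamma_re_le_mul_norm_Gamma {z : ℂ} (hz : 0 < z.re) :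
    Real.Gamma z.re ≤
      √(1 + (z.im / z.re) ^ 2) * exp (z.im * arctan (z.im / z.re)) * ‖Complex.Gamma z‖ := by
  refine le_of_tendsto_of_tendsto (Real.GammaSeq_tendsto_Gamma _)
    ((Complex.GammaSeq_tendsto_Gamma z).norm.const_mul _) ?_
  filter_upwards [eventually_ne_atTop 0] with n hn
  rw [Real.GammaSeq_re_eq_norm_mul_prod hz hn, mul_comm _ ‖_‖]
  exact mul_le_mul_of_nonneg_left (Complex.prod_norm_add_natCast_div_re_le hz n) (norm_nonneg _)

theorem Complex.abs_im_div_re_le_tan {z : ℂ} {φ : ℝ} (harg : |arg z| ≤ φ) (hφ : φ < π / 2) :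
    |z.im / z.re| ≤ Real.tan φ := by
  have mem : ∀ θ, |θ| ≤ φ → θ ∈ Ioo (-(π / 2)) (π / 2) := fun θ hθ => by
    obtain ⟨h₁, h₂⟩ := abs_le.mp hθ
    constructor <;> linarith
  have hφ0 : 0 ≤ φ := (abs_nonneg _).trans harg
  obtain ⟨hlo, hhi⟩ := abs_le.mp harg
  rw [← tan_arg, abs_le, ← Real.tan_neg]
  exact ⟨strictMonoOn_tan.monotoneOn (mem _ (by rw [abs_neg, abs_of_nonneg hφ0]))
      (mem _ harg) hlo,
    strictMonoOn_tan.monotoneOn (mem _ harg) (mem _ (abs_of_nonneg hφ0).le) hhi⟩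

theorem gamma_ratio_angular_bound (φ : ℝ) (hφ0 : 0 < φ) (hφ : φ < Real.pi / 2) :
    ∃ c > (0 : ℝ), ∀ z : ℂ, 1 / 2 ≤ z.re → |Complex.arg z| ≤ φ →
      Real.Gamma z.re / ‖Complex.Gamma z‖ ≤
        c * Real.exp (z.re * φ * Real.tan φ) := by
  have hcos : 0 < cos φ := cos_pos_of_mem_Ioo ⟨by linarith, hφ⟩
  refine ⟨(cos φ)⁻¹, inv_pos.mpr hcos, fun z hre harg => ?_⟩
  have hx : 0 < z.re := by linarith
  have hslope := Complex.abs_im_div_re_le_tan harg hφ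
  have hsqrt : √(1 + (z.im / z.re) ^ 2) ≤ (cos φ)⁻¹ := by
    rw [← inv_sqrt_one_add_tan_sq hcos, inv_inv]
    exact sqrt_le_sqrt (by nlinarith [sq_abs (z.im / z.re), abs_nonneg (z.im / z.re)])
  have hexp : z.im * arctan (z.im / z.re) ≤ z.re * φ * tan φ := by
    have := mul_arctan_le_of_abs_le hslope
    rw [arctan_tan (by linarith) hφ] at this
    calc z.im * arctan (z.im / z.re) = z.re * (z.im / z.re * arctan (z.im / z.re)) := by
          field_simp
      _ ≤ z.re * (tan φ * φ) := mul_le_mul_of_nonneg_left this hx.le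
      _ = z.re * φ * tan φ := by ring
  rw [div_le_iff₀ (norm_pos_iff.mpr (Complex.Gamma_ne_zero_of_re_pos hx))]
  exact (Real.Gamma_re_le_mul_norm_Gamma hx).trans <| mul_le_mul_of_nonneg_right
    (mul_le_mul hsqrt (exp_le_exp.mpr hexp) (exp_pos _).le (inv_pos.mpr hcos).le) (norm_nonneg _)
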